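/- Let V be a commutative unital quantale and Φ a class of V-distributors satisfying (Ax1)–(Ax3). For a V-functor f : (X,a) → (Y,b) the following are equivalent: (i) f is Φ-dense; (ii) Φf : ΦX → ΦY is a left adjoint V-functor; (iii) Φf is Φ-dense. -/

import Mathlib

universe u

/-- A commutative unital quantale: a complete lattice with a commutative monoid
structure whose multiplication distributes over arbitrary suprema. -/
class CommQuantale (V : Type u) extends CompleteLattice V, CommMonoid V where
  mul_sSup : ∀ (x : V) (s : Set V), x * sSup s = ⨆ v ∈ s, x * v

variable {V : Type u} [CommQuantale V]

/-- The internal hom of the quantale: `qhom u v = sSup {w | u * w ≤ v}`. -/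
def qhom (u v : V) : V := sSup {w | u * w ≤ v}

theorem mul_iSup' {ι : Sort*} (u : V) (v : ι → V) : u * (⨆ i, v i) = ⨆ i, u * v i := by
  rw [iSup, CommQuantale.mul_sSup, iSup_range]

theorem mul_mono_right' (u : V) {w w' : V} (h : w ≤ w') : u * w ≤ u * w' := by
  have hs : sSup ({w, w'} : Set V) = w' := by
    apply le_antisymm
    · exact sSup_le (by rintro x (rfl | rfl); exacts [h, le_rfl])
    · exact le_sSup (by simp)
  have hm := CommQuantale.mul_sSup u ({w, w'} : Set V)
  rw [hs] at hm
  rw [hm]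
  exact le_iSup₂ (f := fun v (_ : v ∈ ({w, w'} : Set V)) => u * v) w (by simp)

theorem mul_mono_left' {w w' : V} (h : w ≤ w') (u : V) : w * u ≤ w' * u := by
  rw [mul_comm w u, mul_comm w' u]; exact mul_mono_right' u h

theorem le_qhom_iff {u v w : V} : w ≤ qhom u v ↔ u * w ≤ v := by
  constructor
  · intro h
    have h2 : u * qhom u v ≤ v := by
      rw [qhom, CommQuantale.mul_sSup]
      exact iSup₂_le fun w hw => hw
    exact le_trans (mul_mono_right' u h) h2
  · intro h; exact le_sSup h

theorem bot_mul' (u : V) : (⊥ : V) * u = ⊥ := by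
  rw [mul_comm]
  have hm := CommQuantale.mul_sSup u (∅ : Set V)
  simpa using hm

/-- A `V`-category structure on `X`. -/
structure VCatStr (V : Type u) [CommQuantale V] (X : Type u) where
  hom : X → X → V
  refl : ∀ x, (1 : V) ≤ hom x x
  comp : ∀ x y z, hom x y * hom y z ≤ hom x z

/-- `V`-functoriality. -/
def IsVFunctor {X Y : Type u} (a : VCatStr V X) (b : VCatStr V Y) (f : X → Y) : Prop :=
  ∀ x x', a.hom x x' ≤ b.hom (f x) (f x')

/-- `φ` is a `V`-distributor `(X,a) ⇸ (Y,b)`. -/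
def IsDist {X Y : Type u} (a : VCatStr V X) (b : VCatStr V Y) (φ : X → Y → V) : Prop :=
  (∀ x' x y, a.hom x' x * φ x y ≤ φ x' y) ∧ (∀ x y y', φ x y * b.hom y y' ≤ φ x y')

/-- Composite `ψ ∘ φ` of distributors (`φ` first). -/
def dComp {X Y Z : Type u} (ψ : Y → Z → V) (φ : X → Y → V) : X → Z → V :=
  fun x z => ⨆ y, φ x y * ψ y z

/-- The extension `γ ⟜ α`. -/
def dExt {X Y Z : Type u} (γ : X → Z → V) (α : X → Y → V) : Y → Z → V :=
  fun y z => ⨅ x, qhom (α x y) (γ x z)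

/-- `f_*`. -/
def fStar {X Y : Type u} (b : VCatStr V Y) (f : X → Y) : X → Y → V :=
  fun x y => b.hom (f x) y

/-- `f^*`. -/
def fCostar {X Y : Type u} (b : VCatStr V Y) (f : X → Y) : Y → X → V :=
  fun y x => b.hom y (f x)

/-- `ψ ⊣ φ` is an adjunction of distributors, `ψ : (A,α) ⇸ (B,β)`, `φ : (B,β) ⇸ (A,α)`. -/
def DistAdj {A B : Type u} (α : VCatStr V A) (β : VCatStr V B)
    (ψ : A → B → V) (φ : B → A → V) : Prop :=
  (∀ x x', α.hom x x' ≤ ⨆ y, ψ x y * φ y x') ∧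
  (∀ y y', (⨆ x, φ y x * ψ x y') ≤ β.hom y y')

/-- `φ : (B,β) ⇸ (A,α)` is a right adjoint distributor. -/
def IsRightAdjDist {A B : Type u} (β : VCatStr V B) (α : VCatStr V A) (φ : B → A → V) : Prop :=
  ∃ ψ : A → B → V, IsDist α β ψ ∧ DistAdj α β ψ φ

/-- The pointwise order on `V`-functors. -/
def VLe {X Y : Type u} (b : VCatStr V Y) (f g : X → Y) : Prop :=
  ∀ x, (1 : V) ≤ b.hom (f x) (g x)

/-- Equivalence of `V`-functors. -/
def VEquiv {X Y : Type u} (b : VCatStr V Y) (f g : X → Y) : Prop :=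
  VLe b f g ∧ VLe b g f

def FullyFaithful {X Y : Type u} (a : VCatStr V X) (b : VCatStr V Y) (f : X → Y) : Prop :=
  ∀ x x', b.hom (f x) (f x') = a.hom x x'

def DenseF {X Y : Type u} (b : VCatStr V Y) (f : X → Y) : Prop :=
  ∀ y y', (⨆ x, b.hom y (f x) * b.hom (f x) y') = b.hom y y'

/-- `f` is a left adjoint `V`-functor. -/
def LeftAdjointF {X Y : Type u} (a : VCatStr V X) (b : VCatStr V Y) (f : X → Y) : Prop :=
  ∃ g : Y → X, IsVFunctor b a g ∧ (∀ x, (1 : V) ≤ a.hom x (g (f x))) ∧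
    (∀ y, (1 : V) ≤ b.hom (f (g y)) y)

/-- The one-point `V`-category `G`. -/
def unitCat (V : Type u) [CommQuantale V] : VCatStr V PUnit where
  hom _ _ := 1
  refl _ := le_refl 1
  comp _ _ _ := (one_mul 1).le

/-- Presheaves on `(X,a)`: distributors `(X,a) ⇸ G`. -/
def IsPresheaf {X : Type u} (a : VCatStr V X) (ψ : X → V) : Prop :=
  ∀ x' x, a.hom x' x * ψ x ≤ ψ x'

/-- A class of `V`-distributors: for each pair of `V`-categories a predicate on maps. -/
def DistClass (V : Type u) [CommQuantale V] : Type (u + 1) :=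
  ∀ ⦃X Y : Type u⦄, VCatStr V X → VCatStr V Y → (X → Y → V) → Prop

/-- The presheaf `ψ`, seen as distributor into `G`, lies in `Φ`. -/
def InPhi (Φ : DistClass V) {X : Type u} (a : VCatStr V X) (ψ : X → V) : Prop :=
  Φ a (unitCat V) (fun x _ => ψ x)

/-- Axioms (Ax1)–(Ax3) on a class of distributors. -/
structure DistAx (Φ : DistClass V) : Prop where
  ax1 : ∀ {X Y : Type u} (a : VCatStr V X) (b : VCatStr V Y) (f : X → Y),
      IsVFunctor a b f → Φ b a (fCostar b f)
  ax2_left : ∀ {W X Y : Type u} (d : VCatStr V W) (a : VCatStr V X) (b : VCatStr V Y)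
      (φ : W → Y → V) (f : X → Y), IsDist d b φ → IsVFunctor a b f → Φ d b φ →
      Φ d a (dComp (fCostar b f) φ)
  ax2_right : ∀ {X Y Z : Type u} (a : VCatStr V X) (b : VCatStr V Y) (c : VCatStr V Z)
      (φ : X → Z → V) (f : X → Y), IsDist a c φ → IsVFunctor a b f → Φ a c φ →
      Φ b c (dComp φ (fCostar b f))
  ax2_star : ∀ {W X Z : Type u} (d : VCatStr V W) (a : VCatStr V X) (c : VCatStr V Z)
      (φ : X → Z → V) (f : W → X), IsDist a c φ → IsVFunctor d a f → Φ a c φ →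
      Φ d a (fStar a f) → Φ d c (dComp φ (fStar a f))
  ax3 : ∀ {X Y : Type u} (a : VCatStr V X) (b : VCatStr V Y) (φ : X → Y → V),
      IsDist a b φ → (∀ y, Φ a (unitCat V) (fun x _ => φ x y)) → Φ a b φ

/-- Axiom (Ax4): `f_* ∈ Φ` for every surjective `V`-functor `f`. -/
def Ax4 (Φ : DistClass V) : Prop :=
  ∀ {X Y : Type u} (a : VCatStr V X) (b : VCatStr V Y) (f : X → Y),
    IsVFunctor a b f → Function.Surjective f → Φ a b (fStar b f)

/-- `f` is `Φ`-dense. -/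
def PhiDense (Φ : DistClass V) {X Y : Type u} (a : VCatStr V X) (b : VCatStr V Y)
    (f : X → Y) : Prop :=
  Φ a b (fStar b f)

/-- The `V`-category structure on `X → V`. -/
def funCat (V : Type u) [CommQuantale V] (X : Type u) : VCatStr V (X → V) where
  hom ψ ψ' := ⨅ x, qhom (ψ x) (ψ' x)
  refl ψ := le_iInf fun x => le_qhom_iff.mpr (mul_one _).le
  comp ψ χ ω := le_iInf fun x => le_qhom_iff.mpr <| by
    calc ψ x * ((⨅ x', qhom (ψ x') (χ x')) * (⨅ x', qhom (χ x') (ω x')))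
        = (ψ x * (⨅ x', qhom (ψ x') (χ x'))) * (⨅ x', qhom (χ x') (ω x')) :=
          (mul_assoc _ _ _).symm
      _ ≤ χ x * (⨅ x', qhom (χ x') (ω x')) :=
          mul_mono_left' (le_qhom_iff.mp (iInf_le (fun x' => qhom (ψ x') (χ x')) x)) _
      _ ≤ ω x := le_qhom_iff.mp (iInf_le (fun x' => qhom (χ x') (ω x')) x)

/-- Full sub-`V`-category on a predicate. -/
def subCat {X : Type u} (a : VCatStr V X) (P : X → Prop) : VCatStr V {x : X // P x} where
  hom x y := a.hom x.1 y.1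
  refl x := a.refl x.1
  comp x y z := a.comp x.1 y.1 z.1

/-- Carrier of the presheaf `V`-category `PX`. -/
def PCarrier {X : Type u} (a : VCatStr V X) : Type u := {ψ : X → V // IsPresheaf a ψ}

/-- The presheaf `V`-category `PX`. -/
def pCat {X : Type u} (a : VCatStr V X) : VCatStr V (PCarrier a) :=
  subCat (funCat V X) (IsPresheaf a)

/-- Carrier of `ΦX`: presheaves lying in `Φ`. -/
def PhiCarrier (Φ : DistClass V) {X : Type u} (a : VCatStr V X) : Type u :=
  {ψ : X → V // IsPresheaf a ψ ∧ InPhi Φ a ψ}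

/-- The `V`-category `ΦX`. -/
def phiCat (Φ : DistClass V) {X : Type u} (a : VCatStr V X) : VCatStr V (PhiCarrier Φ a) :=
  subCat (funCat V X) fun ψ => IsPresheaf a ψ ∧ InPhi Φ a ψ

/-- The inclusion `ΦX → PX`. -/
def phiIncl (Φ : DistClass V) {X : Type u} (a : VCatStr V X) : PhiCarrier Φ a → PCarrier a :=
  fun ψ => ⟨ψ.1, ψ.2.1⟩

/-- The corestricted Yoneda functor `y^Φ_X : X → ΦX`. -/
def yPhi (Φ : DistClass V) (hΦ : DistAx Φ) {X : Type u} (a : VCatStr V X) (x : X) :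
    PhiCarrier Φ a :=
  ⟨fun x' => a.hom x' x,
   fun x' x'' => a.comp x' x'' x,
   hΦ.ax1 (unitCat V) a (fun _ => x) (fun _ _ => a.refl x)⟩

/-- `Φf : ΦX → ΦY`, `ψ ↦ ψ ∘ f^*`. -/
def phiMap (Φ : DistClass V) (hΦ : DistAx Φ) {X Y : Type u} (a : VCatStr V X) (b : VCatStr V Y)
    (f : X → Y) (hf : IsVFunctor a b f) (ψ : PhiCarrier Φ a) : PhiCarrier Φ b :=
  ⟨fun y => ⨆ x, b.hom y (f x) * ψ.1 x,
   by
    intro y' y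
    rw [mul_iSup']
    refine iSup_le fun x => ?_
    refine le_trans ?_ (le_iSup _ x)
    calc b.hom y' y * (b.hom y (f x) * ψ.1 x)
        = (b.hom y' y * b.hom y (f x)) * ψ.1 x := (mul_assoc _ _ _).symm
      _ ≤ b.hom y' (f x) * ψ.1 x := mul_mono_left' (b.comp y' y (f x)) _,
   by
    have hd : IsDist a (unitCat V) (fun x (_ : PUnit) => ψ.1 x) :=
      ⟨fun x' x _ => ψ.2.1 x' x, fun x _ _ => le_of_eq (mul_one _)⟩
    exact hΦ.ax2_right a b (unitCat V) _ f hd hf ψ.2.2⟩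

/-- `g` is the `φ`-weighted colimit of `h`, i.e. `g_* = h_* ⟜ φ`. -/
def IsColimit {Y Z X : Type u} (_b : VCatStr V Y) (_c : VCatStr V Z) (a : VCatStr V X)
    (φ : Y → Z → V) (h : Y → X) (g : Z → X) : Prop :=
  ∀ z x, a.hom (g z) x = ⨅ y, qhom (φ y z) (a.hom (h y) x)

/-- `Φ`-cocompleteness. -/
def PhiCocomplete (Φ : DistClass V) {X : Type u} (a : VCatStr V X) : Prop :=
  ∀ ⦃Y Z : Type u⦄ (b : VCatStr V Y) (c : VCatStr V Z) (φ : Y → Z → V) (h : Y → X),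
    IsDist b c φ → Φ b c φ → IsVFunctor b a h →
    ∃ g : Z → X, IsVFunctor c a g ∧ IsColimit b c a φ h g

/-- `Φ`-cocontinuity. -/
def PhiCocontinuous (Φ : DistClass V) {X X' : Type u} (a : VCatStr V X) (a' : VCatStr V X')
    (f : X → X') : Prop :=
  ∀ ⦃Y Z : Type u⦄ (b : VCatStr V Y) (c : VCatStr V Z) (φ : Y → Z → V) (h : Y → X) (g : Z → X),
    IsDist b c φ → Φ b c φ → IsVFunctor b a h → IsVFunctor c a g →
    IsColimit b c a φ h g → IsColimit b c a' φ (f ∘ h) (f ∘ g)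

/-- `Φ`-injectivity. -/
def PhiInjective (Φ : DistClass V) {X : Type u} (a : VCatStr V X) : Prop :=
  ∀ ⦃A B : Type u⦄ (α : VCatStr V A) (β : VCatStr V B) (f : A → X) (i : A → B),
    IsVFunctor α a f → IsVFunctor α β i → FullyFaithful α β i → PhiDense Φ α β i →
    ∃ g : B → X, IsVFunctor β a g ∧ VEquiv a (g ∘ i) f

/-- Separatedness. -/
def Separated {X : Type u} (a : VCatStr V X) : Prop :=
  ∀ ⦃Y : Type u⦄ (b : VCatStr V Y) (f g : Y → X),
    IsVFunctor b a f → IsVFunctor b a g → VEquiv a f g → f = g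

/-!
(i) ⇒ (ii): the right adjoint of `Φf` is restriction `ψ ↦ ψ ∘ f`, i.e. `ψ ↦ ψ ∘ f_*`, which lands
in `ΦX` exactly because `f_* ∈ Φ` (Ax2). (ii) ⇒ (iii): if `Φf ⊣ g` then `(Φf)_* = g^*`, which lies
in `Φ` by (Ax1). (iii) ⇒ (i): since `Φf ∘ y_X = y_Y ∘ f` and `y_Y` is fully faithful,
`f_* = y_Y^* ∘ (Φf)_* ∘ (y_X)_*`; the Yoneda functor `y_X` is `Φ`-dense, so (Ax2) gives `f_* ∈ Φ`.
-/

instance : IsQuantale V where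
  mul_sSup_distrib := CommQuantale.mul_sSup
  sSup_mul_distrib s x := by simpa only [mul_comm _ x] using CommQuantale.mul_sSup x s

open Quantale

section Distributors

variable {W X Y Z : Type u} {a : VCatStr V X} {b : VCatStr V Y} {c : VCatStr V Z}

theorem isDist_fStar {f : X → Y} (hf : IsVFunctor a b f) : IsDist a b (fStar b f) :=
  ⟨fun x' x _ => (mul_le_mul_left (hf x' x) _).trans (b.comp _ _ _),
   fun _ _ _ => b.comp _ _ _⟩

theorem isDist_fCostar {f : X → Y} (hf : IsVFunctor a b f) : IsDist b a (fCostar b f) :=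
  ⟨fun _ _ _ => b.comp _ _ _,
   fun _ x x' => (mul_le_mul_right (hf x x') _).trans (b.comp _ _ _)⟩

theorem isDist_dComp {φ : X → Y → V} {ψ : Y → Z → V} (hφ : IsDist a b φ) (hψ : IsDist b c ψ) :
    IsDist a c (dComp ψ φ) := by
  refine ⟨fun x' x z => ?_, fun x z z' => ?_⟩
  · rw [dComp, mul_iSup_distrib]
    refine iSup_mono fun y => ?_
    rw [← mul_assoc]
    exact mul_le_mul_left (hφ.1 x' x y) _
  · rw [dComp, iSup_mul_distrib]
    refine iSup_mono fun y => ?_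
    rw [mul_assoc]
    exact mul_le_mul_right (hψ.2 y z z') _

theorem dComp_fStar {φ : X → Z → V} (hφ : IsDist a c φ) (h : W → X) :
    dComp φ (fStar a h) = fun w z => φ (h w) z := by
  funext w z
  refine le_antisymm (iSup_le fun x => hφ.1 (h w) x z) ?_
  calc φ (h w) z = 1 * φ (h w) z := (one_mul _).symm
    _ ≤ a.hom (h w) (h w) * φ (h w) z := mul_le_mul_left (a.refl _) _
    _ ≤ dComp φ (fStar a h) w z := le_iSup (fun x => a.hom (h w) x * φ x z) (h w)

theorem IsPresheaf.isDist {ψ : X → V} (hψ : IsPresheaf a ψ) :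
    IsDist a (unitCat V) (fun x _ => ψ x) :=
  ⟨fun x' x _ => hψ x' x, fun _ _ _ => (mul_one _).le⟩

end Distributors

section Adjunction

variable {A B : Type u} {α : VCatStr V A} {β : VCatStr V B}

theorem fStar_eq_fCostar_of_adjoint {h : A → B} (hh : IsVFunctor α β h)
    {g : B → A} (hg : IsVFunctor β α g) (unit : ∀ x, (1 : V) ≤ α.hom x (g (h x)))
    (counit : ∀ y, (1 : V) ≤ β.hom (h (g y)) y) : fStar β h = fCostar α g := by
  funext x y
  apply le_antisymm
  · calc β.hom (h x) y = 1 * β.hom (h x) y := (one_mul _).symm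
      _ ≤ α.hom x (g (h x)) * α.hom (g (h x)) (g y) := mul_le_mul' (unit x) (hg _ _)
      _ ≤ α.hom x (g y) := α.comp _ _ _
  · calc α.hom x (g y) = α.hom x (g y) * 1 := (mul_one _).symm
      _ ≤ β.hom (h x) (h (g y)) * β.hom (h (g y)) y := mul_le_mul' (hh _ _) (counit y)
      _ ≤ β.hom (h x) y := β.comp _ _ _

theorem LeftAdjointF.phiDense {Φ : DistClass V} (hΦ : DistAx Φ) {h : A → B}
    (hh : IsVFunctor α β h) (hadj : LeftAdjointF α β h) : PhiDense Φ α β h := by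
  obtain ⟨g, hg, unit, counit⟩ := hadj
  rw [PhiDense, fStar_eq_fCostar_of_adjoint hh hg unit counit]
  exact hΦ.ax1 β α g hg

end Adjunction

section Yoneda

variable {Φ : DistClass V} (hΦ : DistAx Φ) {X Y : Type u} {a : VCatStr V X} {b : VCatStr V Y}

theorem phiCat_hom_yPhi (ψ : PhiCarrier Φ a) (x : X) :
    (phiCat Φ a).hom (yPhi Φ hΦ a x) ψ = ψ.1 x := by
  refine le_antisymm ?_ (le_iInf fun x' => le_qhom_iff.mpr (ψ.2.1 x' x))
  calc (phiCat Φ a).hom (yPhi Φ hΦ a x) ψ ≤ qhom (a.hom x x) (ψ.1 x) :=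
        iInf_le (fun x' => qhom (a.hom x' x) (ψ.1 x')) x
    _ = 1 * qhom (a.hom x x) (ψ.1 x) := (one_mul _).symm
    _ ≤ a.hom x x * qhom (a.hom x x) (ψ.1 x) := mul_le_mul_left (a.refl x) _
    _ ≤ ψ.1 x := le_qhom_iff.mp le_rfl

theorem yPhi_fullyFaithful : FullyFaithful a (phiCat Φ a) (yPhi Φ hΦ a) :=
  fun x x' => phiCat_hom_yPhi hΦ (yPhi Φ hΦ a x') x

theorem yPhi_isVFunctor : IsVFunctor a (phiCat Φ a) (yPhi Φ hΦ a) :=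
  fun x x' => (yPhi_fullyFaithful hΦ x x').ge

theorem yPhi_phiDense : PhiDense Φ a (phiCat Φ a) (yPhi Φ hΦ a) := by
  refine hΦ.ax3 a (phiCat Φ a) _ (isDist_fStar (yPhi_isVFunctor hΦ)) fun ψ => ?_
  simp only [fStar, phiCat_hom_yPhi]
  exact ψ.2.2

end Yoneda

section PhiMap

variable {Φ : DistClass V} (hΦ : DistAx Φ) {X Y : Type u} {a : VCatStr V X} {b : VCatStr V Y}
  {f : X → Y} (hf : IsVFunctor a b f)

theorem phiMap_isVFunctor : IsVFunctor (phiCat Φ a) (phiCat Φ b) (phiMap Φ hΦ a b f hf) := by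
  intro ψ ψ'
  refine le_iInf fun y => le_qhom_iff.mpr ?_
  show (⨆ x, b.hom y (f x) * ψ.1 x) * _ ≤ ⨆ x, b.hom y (f x) * ψ'.1 x
  rw [iSup_mul_distrib]
  refine iSup_mono fun x => ?_
  rw [mul_assoc]
  exact mul_le_mul_right (le_qhom_iff.mp (iInf_le (fun x' => qhom (ψ.1 x') (ψ'.1 x')) x)) _

theorem phiMap_yPhi (x : X) : phiMap Φ hΦ a b f hf (yPhi Φ hΦ a x) = yPhi Φ hΦ b (f x) := by
  refine Subtype.ext (funext fun y => le_antisymm ?_ ?_)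
  · exact iSup_le fun x' => (mul_le_mul_right (hf x' x) _).trans (b.comp _ _ _)
  · calc b.hom y (f x) = b.hom y (f x) * 1 := (mul_one _).symm
      _ ≤ b.hom y (f x) * a.hom x x := mul_le_mul_right (a.refl x) _
      _ ≤ (phiMap Φ hΦ a b f hf (yPhi Φ hΦ a x)).1 y :=
        le_iSup (fun x' => b.hom y (f x') * a.hom x' x) x

def phiRestrict (hd : PhiDense Φ a b f) (ψ : PhiCarrier Φ b) : PhiCarrier Φ a :=
  ⟨fun x => ψ.1 (f x),
   fun x' x => (mul_le_mul_left (hf x' x) _).trans (ψ.2.1 _ _),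
   by
    have h := hΦ.ax2_star a b (unitCat V) _ f ψ.2.1.isDist hf ψ.2.2 hd
    rw [dComp_fStar ψ.2.1.isDist] at h
    exact h⟩

theorem phiRestrict_isVFunctor (hd : PhiDense Φ a b f) :
    IsVFunctor (phiCat Φ b) (phiCat Φ a) (phiRestrict hΦ hf hd) :=
  fun _ _ => le_iInf fun x => iInf_le _ (f x)

theorem leftAdjointF_phiMap (hd : PhiDense Φ a b f) :
    LeftAdjointF (phiCat Φ a) (phiCat Φ b) (phiMap Φ hΦ a b f hf) := by
  refine ⟨phiRestrict hΦ hf hd, phiRestrict_isVFunctor hΦ hf hd, fun ψ => ?_, fun ψ => ?_⟩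
  · refine le_iInf fun x => le_qhom_iff.mpr ?_
    rw [mul_one]
    calc ψ.1 x = 1 * ψ.1 x := (one_mul _).symm
      _ ≤ b.hom (f x) (f x) * ψ.1 x := mul_le_mul_left (b.refl _) _
      _ ≤ ⨆ x', b.hom (f x) (f x') * ψ.1 x' := le_iSup (fun x' => b.hom (f x) (f x') * ψ.1 x') x
  · refine le_iInf fun y => le_qhom_iff.mpr ?_
    rw [mul_one]
    exact iSup_le fun x => ψ.2.1 y (f x)

theorem fStar_eq_dComp_phiMap :
    fStar b f = dComp (dComp (fCostar (phiCat Φ b) (yPhi Φ hΦ b))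
      (fStar (phiCat Φ b) (phiMap Φ hΦ a b f hf))) (fStar (phiCat Φ a) (yPhi Φ hΦ a)) := by
  rw [dComp_fStar (isDist_dComp (isDist_fStar (phiMap_isVFunctor hΦ hf))
      (isDist_fCostar (yPhi_isVFunctor hΦ))),
    dComp_fStar (isDist_fCostar (yPhi_isVFunctor hΦ))]
  funext x y
  simp only [fCostar, phiMap_yPhi]
  exact (yPhi_fullyFaithful hΦ _ _).symm

theorem PhiDense.of_phiDense_phiMap
    (hd : PhiDense Φ (phiCat Φ a) (phiCat Φ b) (phiMap Φ hΦ a b f hf)) : PhiDense Φ a b f := by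
  have hF := phiMap_isVFunctor hΦ hf
  have hyY := yPhi_isVFunctor hΦ (a := b)
  rw [PhiDense, fStar_eq_dComp_phiMap hΦ hf]
  refine hΦ.ax2_star _ _ _ _ _ (isDist_dComp (isDist_fStar hF) (isDist_fCostar hyY))
    (yPhi_isVFunctor hΦ) ?_ (yPhi_phiDense hΦ)
  exact hΦ.ax2_left _ _ _ _ _ (isDist_fStar hF) hyY hd

end PhiMap

/-- `f` is `Φ`-dense iff `Φf` is a left adjoint iff `Φf` is `Φ`-dense. -/
theorem stmt10 (Φ : DistClass V) (hΦ : DistAx Φ) {X Y : Type u}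
    (a : VCatStr V X) (b : VCatStr V Y) (f : X → Y) (hf : IsVFunctor a b f) :
    List.TFAE [
      PhiDense Φ a b f,
      LeftAdjointF (phiCat Φ a) (phiCat Φ b) (phiMap Φ hΦ a b f hf),
      PhiDense Φ (phiCat Φ a) (phiCat Φ b) (phiMap Φ hΦ a b f hf)] := by
  tfae_have 1 → 2 := leftAdjointF_phiMap hΦ hf
  tfae_have 2 → 3 := LeftAdjointF.phiDense hΦ (phiMap_isVFunctor hΦ hf)
  tfae_have 3 → 1 := PhiDense.of_phiDense_phiMap hΦ hf
  tfae_finish
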